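/- Bathtub/triangle lemma: let t₀ < t₁, α < β, and let q : [t₀,t₁] → ℝ be absolutely continuous with q(t₀) = q₀ and q'(t) ∈ [α, β] a.e. Set q̲(t) = q₀ + α(t − t₀) and suppose q(t₁) = q̲(t₁) + δ with 0 ≤ δ ≤ (β−α)(t₁−t₀). Then ∫_{t₀}^{t₁} q(t) dt ≥ ∫_{t₀}^{t₁} q̲(t) dt + δ²/(2(β−α)). -/
import Mathlib


open MeasureTheory

/-- bathtub/triangle lemma: an absolutely continuous `q` on
`[t₀,t₁]` with `q(t₀)=q₀` and a.e. derivative in `[α,β]` (written in integral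
form `q t = q₀ + ∫_{t₀}^t u` with `u ∈ [α,β]` a.e.), whose terminal value
exceeds the minimal-slope line `q̲(t) = q₀ + α(t−t₀)` by `δ`, satisfies
`∫ q ≥ ∫ q̲ + δ²/(2(β−α))`. -/
theorem stmt_12 (t₀ t₁ α β q₀ δ : ℝ) (ht : t₀ < t₁) (hαβ : α < β)
    (q u : ℝ → ℝ) (hu : Measurable u)
    (hbound : ∀ᵐ s ∂(volume.restrict (Set.Icc t₀ t₁)), u s ∈ Set.Icc α β)
    (hq : ∀ t ∈ Set.Icc t₀ t₁, q t = q₀ + ∫ s in t₀..t, u s)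
    (hδ0 : 0 ≤ δ) (hδ1 : δ ≤ (β - α) * (t₁ - t₀))
    (hterm : q t₁ = (q₀ + α * (t₁ - t₀)) + δ) :
    (∫ t in t₀..t₁, (q₀ + α * (t - t₀))) + δ ^ 2 / (2 * (β - α)) ≤
      ∫ t in t₀..t₁, q t := by
  have hc : (0:ℝ) < β - α := by linarith
  set c := β - α with hc_def
  -- integrability of u on [t₀, t₁]
  have huint : IntegrableOn u (Set.Icc t₀ t₁) volume := by
    refine Integrable.mono' (integrable_const (max |α| |β|)) (hu.aestronglyMeasurable) ?_
    filter_upwards [hbound] with s hs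
    rw [Real.norm_eq_abs, abs_le]
    constructor
    · have := hs.1; have := neg_abs_le α; have := le_max_left |α| |β|; linarith
    · have := hs.2; have := le_abs_self β; have := le_max_right |α| |β|; linarith
  have huII : ∀ a b, a ∈ Set.Icc t₀ t₁ → b ∈ Set.Icc t₀ t₁ →
      IntervalIntegrable u volume a b := by
    intro a b ha hb
    rw [intervalIntegrable_iff]
    exact huint.mono_set (fun x hx => ⟨le_trans (le_min ha.1 hb.1) (le_of_lt hx.1),
      le_trans hx.2 (max_le ha.2 hb.2)⟩)
  have ht01 : t₀ ∈ Set.Icc t₀ t₁ := ⟨le_refl _, ht.le⟩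
  have ht11 : t₁ ∈ Set.Icc t₀ t₁ := ⟨ht.le, le_refl _⟩
  -- total integral of u
  have htot : (∫ s in t₀..t₁, u s) = α * (t₁ - t₀) + δ := by
    have := hq t₁ ht11
    rw [hterm] at this; linarith
  -- pointwise lower bounds on ∫_{t₀}^t u
  have key : ∀ t ∈ Set.Icc t₀ t₁,
      α * (t - t₀) + max 0 (δ - c * (t₁ - t)) ≤ ∫ s in t₀..t, u s := by
    intro t htm
    have h1 : α * (t - t₀) ≤ ∫ s in t₀..t, u s := by
      have : (∫ s in t₀..t, (α : ℝ)) ≤ ∫ s in t₀..t, u s := by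
        refine intervalIntegral.integral_mono_ae_restrict htm.1
          (intervalIntegrable_const) (huII t₀ t ht01 htm) ?_
        have hsub : Set.Icc t₀ t ⊆ Set.Icc t₀ t₁ :=
          Set.Icc_subset_Icc le_rfl htm.2
        filter_upwards [ae_restrict_of_ae_restrict_of_subset hsub hbound] with s hs
        exact hs.1
      simpa [mul_comm] using this
    have h2 : (∫ s in t..t₁, u s) ≤ β * (t₁ - t) := by
      have : (∫ s in t..t₁, u s) ≤ ∫ s in t..t₁, (β : ℝ) := by
        refine intervalIntegral.integral_mono_ae_restrict htm.2
          (huII t t₁ htm ht11) (intervalIntegrable_const) ?_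
        have hsub : Set.Icc t t₁ ⊆ Set.Icc t₀ t₁ :=
          Set.Icc_subset_Icc htm.1 le_rfl
        filter_upwards [ae_restrict_of_ae_restrict_of_subset hsub hbound] with s hs
        exact hs.2
      simpa [mul_comm] using this
    have hsplit : (∫ s in t₀..t, u s) + (∫ s in t..t₁, u s) = ∫ s in t₀..t₁, u s :=
      intervalIntegral.integral_add_adjacent_intervals (huII t₀ t ht01 htm)
        (huII t t₁ htm ht11)
    have h3 : α * (t - t₀) + (δ - c * (t₁ - t)) ≤ ∫ s in t₀..t, u s := by
      have : (∫ s in t₀..t, u s) = (α * (t₁ - t₀) + δ) - ∫ s in t..t₁, u s := by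
        rw [← htot]; linarith
      rw [this, hc_def]; nlinarith [h2]
    rcases le_total (δ - c * (t₁ - t)) 0 with h | h
    · rw [max_eq_left h]; simpa using h1
    · rw [max_eq_right h]; exact h3
  -- the continuous representative of q
  set Q : ℝ → ℝ := fun t => q₀ + ∫ s in t₀..t, u s with hQ
  have hQeq : (∫ t in t₀..t₁, q t) = ∫ t in t₀..t₁, Q t := by
    apply intervalIntegral.integral_congr
    intro x hx
    rw [Set.uIcc_of_le ht.le] at hx
    exact hq x hx
  have hQcont : ContinuousOn Q (Set.Icc t₀ t₁) := by
    apply ContinuousOn.add continuousOn_const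
    have := intervalIntegral.continuousOn_primitive_interval' (huII t₀ t₁ ht01 ht11)
      (by rw [Set.uIcc_of_le ht.le]; exact ht01)
    rwa [Set.uIcc_of_le ht.le] at this
  have hQint : IntervalIntegrable Q volume t₀ t₁ :=
    hQcont.intervalIntegrable_of_Icc ht.le
  -- lower bound function
  set L : ℝ → ℝ := fun t => (q₀ + α * (t - t₀)) + max 0 (δ - c * (t₁ - t)) with hL
  have hLcont : Continuous L := by
    apply Continuous.add (by fun_prop)
    exact continuous_const.max (by fun_prop)
  have hLQ : (∫ t in t₀..t₁, L t) ≤ ∫ t in t₀..t₁, Q t := by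
    refine intervalIntegral.integral_mono_on ht.le (hLcont.intervalIntegrable _ _) hQint ?_
    intro x hx
    have := key x hx
    simp only [hL, hQ]
    linarith
  -- compute ∫ L
  have hbase : IntervalIntegrable (fun t => q₀ + α * (t - t₀)) volume t₀ t₁ := by
    apply Continuous.intervalIntegrable; fun_prop
  have hmaxint : IntervalIntegrable (fun t => max 0 (δ - c * (t₁ - t))) volume t₀ t₁ := by
    apply Continuous.intervalIntegrable
    exact continuous_const.max (by fun_prop)
  have hLsplit : (∫ t in t₀..t₁, L t) =
      (∫ t in t₀..t₁, (q₀ + α * (t - t₀))) + ∫ t in t₀..t₁, max 0 (δ - c * (t₁ - t)) := by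
    rw [hL, ← intervalIntegral.integral_add hbase hmaxint]
  -- compute the triangle integral
  set a : ℝ := t₁ - δ / c with ha_def
  have ha0 : t₀ ≤ a := by
    rw [ha_def]
    have : δ / c ≤ t₁ - t₀ := by
      rw [div_le_iff₀ hc]; nlinarith
    linarith
  have ha1 : a ≤ t₁ := by
    rw [ha_def]; have : 0 ≤ δ / c := div_nonneg hδ0 hc.le; linarith
  have htri : (∫ t in t₀..t₁, max 0 (δ - c * (t₁ - t))) = δ ^ 2 / (2 * c) := by
    have hsplit2 : (∫ t in t₀..a, max 0 (δ - c * (t₁ - t))) +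
        (∫ t in a..t₁, max 0 (δ - c * (t₁ - t))) =
        ∫ t in t₀..t₁, max 0 (δ - c * (t₁ - t)) := by
      apply intervalIntegral.integral_add_adjacent_intervals <;>
        · apply Continuous.intervalIntegrable; exact continuous_const.max (by fun_prop)
    have hleft : (∫ t in t₀..a, max 0 (δ - c * (t₁ - t))) = 0 := by
      rw [show (0:ℝ) = ∫ t in t₀..a, (0:ℝ) by simp]
      apply intervalIntegral.integral_congr
      intro x hx
      rw [Set.uIcc_of_le ha0] at hx
      have hx2 : x ≤ a := hx.2
      have : δ - c * (t₁ - x) ≤ 0 := by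
        have : δ / c ≤ t₁ - x := by rw [ha_def] at hx2; linarith
        rw [div_le_iff₀ hc] at this; nlinarith
      simp [max_eq_left this]
    have hright : (∫ t in a..t₁, max 0 (δ - c * (t₁ - t))) = δ ^ 2 / (2 * c) := by
      have heq : (∫ t in a..t₁, max 0 (δ - c * (t₁ - t))) =
          ∫ t in a..t₁, (δ - c * t₁) + c * t := by
        apply intervalIntegral.integral_congr
        intro x hx
        rw [Set.uIcc_of_le ha1] at hx
        have hx1 : a ≤ x := hx.1
        have : 0 ≤ δ - c * (t₁ - x) := by
          have : t₁ - x ≤ δ / c := by rw [ha_def] at hx1; linarith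
          rw [le_div_iff₀ hc] at this; nlinarith
        simp only [max_eq_right this]; ring
      rw [heq]
      rw [intervalIntegral.integral_add (by apply Continuous.intervalIntegrable; fun_prop)
        (by apply Continuous.intervalIntegrable; fun_prop)]
      rw [intervalIntegral.integral_const, intervalIntegral.integral_const_mul]
      have hid : (∫ x in a..t₁, (x:ℝ)) = (t₁ ^ 2 - a ^ 2) / 2 := integral_id
      rw [hid]
      have hcne : c ≠ 0 := ne_of_gt hc
      rw [smul_eq_mul, ha_def]
      field_simp [hcne]
      ring
    rw [← hsplit2, hleft, hright, zero_add]
  rw [hQeq]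
  calc (∫ t in t₀..t₁, (q₀ + α * (t - t₀))) + δ ^ 2 / (2 * c)
      = ∫ t in t₀..t₁, L t := by rw [hLsplit, htri]
    _ ≤ ∫ t in t₀..t₁, Q t := hLQ
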